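/- Let 0 < μ ≤ L, let f be μ-strongly convex with L-Lipschitz gradient on ℝⁿ, with minimizer x⋆, and let 0 < s ≤ 1/L. Then the iterates of the implicit Euler scheme for the high-resolution heavy-ball ODE satisfy, for every k ≥ 0, f(x_k) − f(x⋆) ≤ ( 3sL/(1 + √(μs))² + 2μ/L + (1 + √(μs))/2 ) · L‖x₀ − x⋆‖² / (1 + √(μs)/4)^k. -/

import Mathlib

/-!
A discrete Lyapunov argument. The energy
`E(x, v) = f x - f x⋆ + ‖v‖² / 4 + ‖v + 2√μ (x - x⋆)‖² / 4`
contracts along the implicit scheme: `(1 + √(μs) / 4) E(x_{k+1}, v_{k+1}) ≤ E(x_k, v_k)`.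
Solving the scheme backwards expresses `v_k` and `v_k + 2√μ (x_k - x⋆)` through the new
iterate, and strong convexity, applied between `x_{k+1}` and `x_k` and between `x_{k+1}` and
`x⋆`, supplies the dissipation. Hence `f(x_k) - f x⋆ ≤ E(x_k, v_k) ≤ E(x₀, v₀) / (1 + √(μs) / 4)^k`,
and `E(x₀, v₀)` is bounded by the descent lemma and `‖∇f(x₀)‖ ≤ L ‖x₀ - x⋆‖`.
-/

open scoped RealInnerProductSpace

theorem norm_add_sq_le_two_mul {E : Type*} [SeminormedAddCommGroup E] (u w : E) :
    ‖u + w‖ ^ 2 ≤ 2 * ‖u‖ ^ 2 + 2 * ‖w‖ ^ 2 := by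
  nlinarith [norm_add_le u w, norm_nonneg (u + w), sq_nonneg (‖u‖ - ‖w‖)]

section InnerProductSpace

variable {E : Type*} [NormedAddCommGroup E] [InnerProductSpace ℝ E]

theorem norm_add_smul_sq (u w : E) (c : ℝ) :
    ‖u + c • w‖ ^ 2 = ‖u‖ ^ 2 + 2 * c * ⟪u, w⟫ + c ^ 2 * ‖w‖ ^ 2 := by
  rw [norm_add_sq_real, real_inner_smul_right, norm_smul, Real.norm_eq_abs, mul_pow, sq_abs]
  ring

theorem norm_add_two_sqrt_smul_sq_le {μ : ℝ} (hμ : 0 ≤ μ) (v d : E) :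
    ‖v + (2 * √μ) • d‖ ^ 2 ≤ 2 * ‖v‖ ^ 2 + 8 * μ * ‖d‖ ^ 2 := by
  have h := norm_add_sq_le_two_mul v ((2 * √μ) • d)
  rw [norm_smul, mul_pow, Real.norm_eq_abs, sq_abs, mul_pow, Real.sq_sqrt hμ] at h
  linarith

theorem IsLocalMin.hasGradientAt_eq_zero [CompleteSpace E] {f : E → ℝ} {g x : E}
    (h : IsLocalMin f x) (hg : HasGradientAt f g x) : g = 0 := by
  simpa using congrArg (InnerProductSpace.toDual ℝ E).symm (h.hasFDerivAt_eq_zero hg.hasFDerivAt)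

theorem le_add_inner_add_of_lipschitz_gradient [CompleteSpace E] {f : E → ℝ} {f' : E → E}
    {L : ℝ} (hgrad : ∀ z, HasGradientAt f (f' z) z)
    (hLip : ∀ z w, ‖f' z - f' w‖ ≤ L * ‖z - w‖) (x y : E) :
    f y ≤ f x + ⟪f' x, y - x⟫ + L / 2 * ‖y - x‖ ^ 2 := by
  set d := y - x
  let ψ : ℝ → ℝ := fun t => f (x + t • d) - t * ⟪f' x, d⟫ - L / 2 * t ^ 2 * ‖d‖ ^ 2
  have hψ : ∀ t : ℝ, HasDerivAt ψ (⟪f' (x + t • d) - f' x, d⟫ - L * t * ‖d‖ ^ 2) t := by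
    intro t
    have hline : HasDerivAt (fun t : ℝ => x + t • d) d t := by
      simpa using ((hasDerivAt_id t).smul_const d).const_add x
    have hf := (hgrad (x + t • d)).hasFDerivAt.comp_hasDerivAt t hline
    refine ((hf.sub ((hasDerivAt_id t).mul_const ⟪f' x, d⟫)).sub
      (((hasDerivAt_pow 2 t).const_mul (L / 2)).mul_const (‖d‖ ^ 2))).congr_deriv ?_
    simp only [InnerProductSpace.toDual_apply_apply, inner_sub_left]
    ring
  have hanti : AntitoneOn ψ (Set.Ici 0) := by
    refine antitoneOn_of_hasDerivWithinAt_nonpos (convex_Ici 0)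
      (fun t _ => (hψ t).continuousAt.continuousWithinAt)
      (fun t _ => (hψ t).hasDerivWithinAt) fun t ht => ?_
    rw [interior_Ici, Set.mem_Ioi] at ht
    have hlip : ‖f' (x + t • d) - f' x‖ ≤ L * (t * ‖d‖) := by
      simpa [norm_smul, abs_of_pos ht] using hLip (x + t • d) x
    nlinarith [real_inner_le_norm (f' (x + t • d) - f' x) d, norm_nonneg d]
  have h01 := hanti Set.self_mem_Ici (Set.mem_Ici.mpr zero_le_one) zero_le_one
  simp only [ψ, d, zero_smul, add_zero, one_smul, add_sub_cancel] at h01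
  norm_num at h01
  linarith

-- Young's inequality, after bounding `2 + m ≤ 2 (1 + m)`.
theorem neg_young_le_mul_inner {a m : ℝ} (ha : 0 ≤ a) (hm : 0 ≤ m) (g v : E) :
    -(a ^ 2 * (1 + m) ^ 2 / 2 * ‖g‖ ^ 2 + 2 * m ^ 2 * ‖v‖ ^ 2) ≤ a * m * (2 + m) * ⟪g, v⟫ := by
  have hgv : 0 ≤ ⟪g, v⟫ + ‖g‖ * ‖v‖ := by
    linarith [neg_le_of_abs_le (abs_real_inner_le_norm g v)]
  nlinarith [mul_nonneg (by positivity : 0 ≤ a * m * (2 + m)) hgv,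
    mul_nonneg (by positivity : 0 ≤ a * m * m) (mul_nonneg (norm_nonneg g) (norm_nonneg v)),
    sq_nonneg (a * (1 + m) * ‖g‖ - 2 * m * ‖v‖)]

theorem sub_add_le_inner_of_strongly_convex {f : E → ℝ} {f' : E → E} {μ : ℝ}
    (hsc : ∀ z w, f w ≥ f z + ⟪f' z, w - z⟫ + μ / 2 * ‖w - z‖ ^ 2) (x y : E) :
    f x - f y + μ / 2 * ‖x - y‖ ^ 2 ≤ ⟪f' x, x - y⟫ := by
  have h := hsc x y
  rw [← neg_sub x y, inner_neg_right, norm_neg] at h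
  linarith

noncomputable def heavyBallLyapunov (f : E → ℝ) (xstar : E) (μ : ℝ) (x v : E) : ℝ :=
  f x - f xstar + ‖v‖ ^ 2 / 4 + ‖v + (2 * √μ) • (x - xstar)‖ ^ 2 / 4

theorem sub_le_heavyBallLyapunov (f : E → ℝ) (xstar : E) (μ : ℝ) (x v : E) :
    f x - f xstar ≤ heavyBallLyapunov f xstar μ x v := by
  unfold heavyBallLyapunov
  linarith [sq_nonneg ‖v‖, sq_nonneg ‖v + (2 * √μ) • (x - xstar)‖]

theorem heavyBallLyapunov_succ_le {f : E → ℝ} {f' : E → E} {μ a : ℝ} {xstar x v x' v' : E}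
    (hsc : ∀ z w, f w ≥ f z + ⟪f' z, w - z⟫ + μ / 2 * ‖w - z‖ ^ 2)
    (hmin : ∀ z, f xstar ≤ f z) (hμ : 0 ≤ μ) (ha : 0 ≤ a) (hm : √μ * a ≤ 1)
    (hx : x' - x = a • v')
    (hv : v' - v = -((2 * (√μ * a)) • v') - (a * (1 + √μ * a)) • f' x') :
    (1 + √μ * a / 4) * heavyBallLyapunov f xstar μ x' v' ≤ heavyBallLyapunov f xstar μ x v := by
  unfold heavyBallLyapunov
  set r := √μ
  set m := r * a
  set g := f' x'
  set d := x' - xstar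
  have hvk : v = (1 + 2 * m) • v' + (a * (1 + m)) • g := by
    rw [show v = v' - (v' - v) by abel, hv]; module
  have hwk : v + (2 * r) • (x - xstar) = (v' + (2 * r) • d) + (a * (1 + m)) • g := by
    rw [hvk, show x - xstar = d - a • v' by rw [← hx]; simp only [d]; abel]; module
  have hnv : ‖v‖ ^ 2 = (1 + 2 * m) ^ 2 * ‖v'‖ ^ 2 + 2 * (1 + 2 * m) * (a * (1 + m)) * ⟪g, v'⟫
      + (a * (1 + m)) ^ 2 * ‖g‖ ^ 2 := by
    rw [hvk, norm_add_smul_sq, real_inner_smul_left, norm_smul, Real.norm_eq_abs, mul_pow, sq_abs,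
      real_inner_comm]
    ring
  have hnw : ‖v + (2 * r) • (x - xstar)‖ ^ 2 = ‖v' + (2 * r) • d‖ ^ 2
      + 2 * (a * (1 + m)) * (⟪g, v'⟫ + 2 * r * ⟪g, d⟫) + (a * (1 + m)) ^ 2 * ‖g‖ ^ 2 := by
    rw [hwk, norm_add_smul_sq, inner_add_left, real_inner_smul_left, real_inner_comm g,
      real_inner_comm g]
  have hF : f x' - f x + m ^ 2 / 2 * ‖v'‖ ^ 2 ≤ a * ⟪g, v'⟫ := by
    have h := sub_add_le_inner_of_strongly_convex hsc x' x
    rw [hx, real_inner_smul_right, norm_smul, Real.norm_of_nonneg ha] at h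
    linear_combination h + a ^ 2 / 2 * ‖v'‖ ^ 2 * Real.sq_sqrt hμ
  have hQ := sub_add_le_inner_of_strongly_convex hsc x' xstar
  have hm0 : 0 ≤ m := by positivity
  have hF'0 : 0 ≤ f x' - f xstar := sub_nonneg.mpr (hmin x')
  have hQ0 : 0 ≤ ⟪g, d⟫ := by linarith [mul_nonneg hμ (sq_nonneg ‖d‖)]
  rw [hnv, hnw]
  -- the dissipation is at least `(m - m² / 2) ‖v'‖² + m (1 + m) ⟪g, d⟫ ≥ m / 4 · E(x', v')`
  linarith [hF, neg_young_le_mul_inner ha hm0 g v',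
    mul_le_mul_of_nonneg_left (norm_add_two_sqrt_smul_sq_le hμ v' d) hm0,
    mul_le_mul_of_nonneg_left hQ hm0, mul_nonneg (sq_nonneg m) hQ0, mul_nonneg hm0 hF'0,
    mul_nonneg (mul_nonneg hm0 (sub_nonneg.mpr hm)) (sq_nonneg ‖v'‖),
    mul_nonneg hm0 (sq_nonneg ‖v'‖)]

theorem heavyBallLyapunov_initial_le [CompleteSpace E] {f : E → ℝ} {f' : E → E}
    {μ L s : ℝ} {xstar x₀ : E} (hgrad : ∀ z, HasGradientAt f (f' z) z)
    (hLip : ∀ z w, ‖f' z - f' w‖ ≤ L * ‖z - w‖) (hgstar : f' xstar = 0)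
    (hμ : 0 ≤ μ) (hL : 0 < L) (hs : 0 ≤ s) :
    heavyBallLyapunov f xstar μ x₀ (-((2 * √s / (1 + √μ * √s)) • f' x₀)) ≤
      (3 * s * L / (1 + √μ * √s) ^ 2 + 2 * μ / L + (1 + √μ * √s) / 2) *
        (L * ‖x₀ - xstar‖ ^ 2) := by
  set q := 1 + √μ * √s
  set Y := ‖x₀ - xstar‖ ^ 2
  have hq : 1 ≤ q := le_add_of_nonneg_right (by positivity)
  have hF0 : f x₀ - f xstar ≤ L / 2 * Y := by
    have h := le_add_inner_add_of_lipschitz_gradient hgrad hLip xstar x₀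
    rw [hgstar, inner_zero_left] at h
    linarith
  have hg : ‖f' x₀‖ ≤ L * ‖x₀ - xstar‖ := by simpa [hgstar] using hLip x₀ xstar
  have hv0 : ‖(2 * √s / q) • f' x₀‖ ^ 2 ≤ 4 * s * L ^ 2 * Y / q ^ 2 := by
    rw [norm_smul, mul_pow, Real.norm_eq_abs, sq_abs, div_pow, mul_pow, Real.sq_sqrt hs]
    have : ‖f' x₀‖ ^ 2 ≤ L ^ 2 * Y := by
      rw [← mul_pow]; exact pow_le_pow_left₀ (norm_nonneg _) hg 2
    calc 2 ^ 2 * s / q ^ 2 * ‖f' x₀‖ ^ 2 ≤ 2 ^ 2 * s / q ^ 2 * (L ^ 2 * Y) := by gcongr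
      _ = 4 * s * L ^ 2 * Y / q ^ 2 := by ring
  have hW := norm_add_two_sqrt_smul_sq_le hμ (-((2 * √s / q) • f' x₀)) (x₀ - xstar)
  unfold heavyBallLyapunov
  rw [norm_neg] at hW ⊢
  have hrhs : (3 * s * L / q ^ 2 + 2 * μ / L + q / 2) * (L * Y)
      = 3 * (4 * s * L ^ 2 * Y / q ^ 2) / 4 + 2 * μ * Y + q * (L * Y) / 2 := by
    field_simp
  rw [hrhs]
  nlinarith [mul_le_mul_of_nonneg_right hq (by positivity : 0 ≤ L * Y)]

end InnerProductSpace

theorem stmt13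
    {n : ℕ} (μ L : ℝ) (hμ : 0 < μ) (hμL : μ ≤ L)
    (f : EuclideanSpace ℝ (Fin n) → ℝ)
    (f' : EuclideanSpace ℝ (Fin n) → EuclideanSpace ℝ (Fin n))
    (hgrad : ∀ z, HasGradientAt f (f' z) z)
    (hLip : ∀ z w, ‖f' z - f' w‖ ≤ L * ‖z - w‖)
    (hsc : ∀ z w, f w ≥ f z + ⟪f' z, w - z⟫ + μ / 2 * ‖w - z‖ ^ 2)
    (xstar : EuclideanSpace ℝ (Fin n)) (hmin : ∀ z, f xstar ≤ f z)
    (s : ℝ) (hs0 : 0 < s) (hs : s ≤ 1 / L)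
    (x v : ℕ → EuclideanSpace ℝ (Fin n))
    (hv0 : v 0 = -((2 * Real.sqrt s / (1 + Real.sqrt (μ * s))) • f' (x 0)))
    (hx : ∀ k : ℕ, x (k + 1) - x k = Real.sqrt s • v (k + 1))
    (hv : ∀ k : ℕ, v (k + 1) - v k = -((2 * Real.sqrt (μ * s)) • v (k + 1))
      - (Real.sqrt s * (1 + Real.sqrt (μ * s))) • f' (x (k + 1)))
    : ∀ k : ℕ, f (x k) - f xstar ≤
      (3 * s * L / (1 + Real.sqrt (μ * s)) ^ 2
        + 2 * μ / L + (1 + Real.sqrt (μ * s)) / 2) *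
      (L * ‖x 0 - xstar‖ ^ 2) / (1 + Real.sqrt (μ * s) / 4) ^ k := by
  intro k
  have hL : 0 < L := hμ.trans_le hμL
  have hm : √μ * √s ≤ 1 := by
    rw [← Real.sqrt_mul hμ.le, Real.sqrt_le_one]
    calc μ * s ≤ L * (1 / L) := by gcongr
      _ = 1 := mul_one_div_cancel hL.ne'
  have hgstar : f' xstar = 0 :=
    ((isMinOn_univ_iff.mpr hmin).isLocalMin Filter.univ_mem).hasGradientAt_eq_zero (hgrad xstar)
  rw [Real.sqrt_mul hμ.le] at hv0 hv ⊢
  have hdecay : ∀ j, heavyBallLyapunov f xstar μ (x (j + 1)) (v (j + 1))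
      ≤ (1 + √μ * √s / 4)⁻¹ * heavyBallLyapunov f xstar μ (x j) (v j) := fun j => by
    rw [le_inv_mul_iff₀ (by positivity)]
    exact heavyBallLyapunov_succ_le hsc hmin hμ.le (Real.sqrt_nonneg s) hm (hx j) (hv j)
  calc f (x k) - f xstar ≤ heavyBallLyapunov f xstar μ (x k) (v k) :=
        sub_le_heavyBallLyapunov f xstar μ (x k) (v k)
    _ ≤ (1 + √μ * √s / 4)⁻¹ ^ k * heavyBallLyapunov f xstar μ (x 0) (v 0) :=
        le_geom (u := fun j => heavyBallLyapunov f xstar μ (x j) (v j)) (by positivity) k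
          fun j _ => hdecay j
    _ ≤ _ := by
        rw [inv_pow, inv_mul_eq_div, hv0]
        gcongr
        exact heavyBallLyapunov_initial_le hgrad hLip hgstar hμ.le hL hs0.le
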